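/- The function φ ↦ 1/Φ(φ) belongs to L²([−π,π]^d) (i.e. ∫_{[−π,π]^d} Φ(φ)^{−2} dφ < ∞) if and only if d ≥ 5. -/

import Mathlib

open MeasureTheory Real Filter
open scoped ENNReal

noncomputable section

/-- The Fourier symbol `Φ(φ) = 2 ∑_j (1 - cos φ_j)` of the negative discrete Laplacian on `ℤ^d`. -/
def Phi (d : ℕ) (φ : Fin d → ℝ) : ℝ := 2 * ∑ j, (1 - Real.cos (φ j))

/-- The cube `[-π, π]^d`. -/
def cube (d : ℕ) : Set (Fin d → ℝ) := Set.univ.pi fun _ => Set.Icc (-π) π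

/-- `I(λ) = (2π)^{-d} ∫_{[-π,π]^d} (λ + Φ(φ))⁻¹ dφ` (Bochner integral, real-valued). -/
def Ir (d : ℕ) (lam : ℝ) : ℝ := ((2 * π) ^ d)⁻¹ * ∫ φ in cube d, (lam + Phi d φ)⁻¹

/-! On the cube `Φ(φ)` is comparable to `‖φ‖²`, by `2(1 - cos t) ≤ t²` and, for `|t| ≤ π`,
`2(1 - cos t) ≥ 4t²/π²`. So `Φ⁻²` is integrable exactly when `‖φ‖⁻⁴` is integrable near the
origin, which in polar coordinates is `∫₀ r^(d-1) r⁻⁴ dr < ∞`, i.e. `d > 4`. -/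

section PowerSingularity

open Metric Set

variable {E : Type*} [NormedAddCommGroup E] [NormedSpace ℝ E] [FiniteDimensional ℝ E]
  [Nontrivial E] [MeasurableSpace E] [BorelSpace E] (μ : Measure E) [μ.IsAddHaarMeasure]

theorem integrableOn_ball_norm_rpow_neg_iff {r α : ℝ} (hr : 0 < r) :
    IntegrableOn (fun x : E => ‖x‖ ^ (-α)) (ball 0 r) μ ↔ α < Module.finrank ℝ E := by
  rw [integrableOn_fun_norm_addHaar μ (f := fun y => y ^ (-α))]
  have h_pow : EqOn (fun y : ℝ => y ^ (Module.finrank ℝ E - 1) • y ^ (-α))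
      (fun y => y ^ ((Module.finrank ℝ E : ℝ) - 1 - α)) (Ioo 0 r) := by
    intro y hy
    have h_dim : 1 ≤ Module.finrank ℝ E := Module.finrank_pos
    dsimp only
    rw [smul_eq_mul, ← rpow_natCast, ← rpow_add hy.1, Nat.cast_sub h_dim, Nat.cast_one,
      sub_eq_add_neg (_ - 1) α]
  rw [integrableOn_congr_fun h_pow measurableSet_Ioo,
    intervalIntegral.integrableOn_Ioo_rpow_iff hr]
  constructor <;> intro h <;> linarith

theorem integrableOn_closedBall_norm_rpow_neg_iff {r α : ℝ} (hr : 0 < r) :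
    IntegrableOn (fun x : E => ‖x‖ ^ (-α)) (closedBall 0 r) μ ↔ α < Module.finrank ℝ E := by
  refine ⟨fun h => ?_, fun h => ?_⟩
  · exact (integrableOn_ball_norm_rpow_neg_iff μ hr).1 (h.mono_set ball_subset_closedBall)
  · exact ((integrableOn_ball_norm_rpow_neg_iff μ (r := r + 1) (by linarith)).2 h).mono_set
      (closedBall_subset_ball (by linarith))

end PowerSingularity

lemma two_mul_one_sub_cos_le_sq (t : ℝ) : 2 * (1 - cos t) ≤ t ^ 2 := by
  linarith [one_sub_sq_div_two_le_cos (x := t)]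

lemma mul_sq_le_two_mul_one_sub_cos {t : ℝ} (ht : |t| ≤ π) :
    4 / π ^ 2 * t ^ 2 ≤ 2 * (1 - cos t) := by
  have h := cos_le_one_sub_mul_cos_sq ht
  have h_eq : 4 / π ^ 2 * t ^ 2 = 2 * (2 / π ^ 2 * t ^ 2) := by ring
  linarith

lemma sq_norm_le_sum_sq {ι : Type*} [Fintype ι] (x : ι → ℝ) : ‖x‖ ^ 2 ≤ ∑ i, x i ^ 2 := by
  have h : ‖x‖ ≤ √(∑ i, x i ^ 2) := (pi_norm_le_iff_of_nonneg (by positivity)).2 fun i =>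
    abs_le_sqrt (Finset.single_le_sum (fun j _ => sq_nonneg (x j)) (Finset.mem_univ i))
  calc ‖x‖ ^ 2 ≤ √(∑ i, x i ^ 2) ^ 2 := by gcongr
    _ = ∑ i, x i ^ 2 := sq_sqrt (by positivity)

lemma continuous_Phi (d : ℕ) : Continuous (Phi d) := by
  unfold Phi
  fun_prop

lemma Phi_zero (d : ℕ) : Phi d 0 = 0 := by
  simp [Phi]

lemma Phi_eq_sum (d : ℕ) (φ : Fin d → ℝ) : Phi d φ = ∑ j, 2 * (1 - cos (φ j)) := by
  rw [Phi, Finset.mul_sum]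

lemma Phi_le (d : ℕ) (φ : Fin d → ℝ) : Phi d φ ≤ d * ‖φ‖ ^ 2 := by
  calc Phi d φ ≤ ∑ _j : Fin d, ‖φ‖ ^ 2 := by
        rw [Phi_eq_sum]
        refine Finset.sum_le_sum fun j _ => (two_mul_one_sub_cos_le_sq _).trans ?_
        simpa using pow_le_pow_left₀ (norm_nonneg _) (norm_le_pi_norm φ j) 2
    _ = d * ‖φ‖ ^ 2 := by simp

lemma cube_eq_closedBall (d : ℕ) : cube d = Metric.closedBall (0 : Fin d → ℝ) π := by
  rw [closedBall_pi _ pi_nonneg]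
  simp [cube, closedBall_eq_Icc]

lemma le_Phi {d : ℕ} {φ : Fin d → ℝ} (hφ : φ ∈ cube d) : 4 / π ^ 2 * ‖φ‖ ^ 2 ≤ Phi d φ := by
  calc 4 / π ^ 2 * ‖φ‖ ^ 2 ≤ ∑ j, 4 / π ^ 2 * φ j ^ 2 := by
        rw [← Finset.mul_sum]
        gcongr
        exact sq_norm_le_sum_sq φ
    _ ≤ Phi d φ := by
        rw [Phi_eq_sum]
        exact Finset.sum_le_sum fun j _ =>
          mul_sq_le_two_mul_one_sub_cos (abs_le.2 (hφ j (Set.mem_univ j)))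

lemma inv_Phi_sq_le {d : ℕ} {φ : Fin d → ℝ} (hφ : φ ∈ cube d) :
    (Phi d φ ^ 2)⁻¹ ≤ (π ^ 2 / 4) ^ 2 * ‖φ‖ ^ (-4 : ℝ) := by
  rcases eq_or_ne φ 0 with rfl | hφ0
  · simp [Phi_zero]
  have h_pos : 0 < 4 / π ^ 2 * ‖φ‖ ^ 2 := by positivity
  calc (Phi d φ ^ 2)⁻¹ ≤ ((4 / π ^ 2 * ‖φ‖ ^ 2) ^ 2)⁻¹ := by
        gcongr
        exact le_Phi hφ
    _ = (π ^ 2 / 4) ^ 2 * ‖φ‖ ^ (-4 : ℝ) := by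
        rw [rpow_neg (norm_nonneg φ), rpow_ofNat]
        field_simp

lemma norm_rpow_neg_four_le {d : ℕ} {φ : Fin d → ℝ} (hφ : φ ∈ cube d) :
    ‖φ‖ ^ (-4 : ℝ) ≤ d ^ 2 * (Phi d φ ^ 2)⁻¹ := by
  rcases eq_or_ne φ 0 with rfl | hφ0
  · simp [Phi_zero]
  have h_pos : 0 < Phi d φ := lt_of_lt_of_le (by positivity) (le_Phi hφ)
  have h_d : (0 : ℝ) < d := pos_of_mul_pos_left (h_pos.trans_le (Phi_le d φ)) (sq_nonneg _)
  calc ‖φ‖ ^ (-4 : ℝ) = d ^ 2 * ((d * ‖φ‖ ^ 2) ^ 2)⁻¹ := by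
        rw [rpow_neg (norm_nonneg φ), rpow_ofNat]
        field_simp
    _ ≤ d ^ 2 * (Phi d φ ^ 2)⁻¹ := by
        gcongr
        exact Phi_le d φ

lemma integrableOn_inv_Phi_sq_iff (d : ℕ) :
    IntegrableOn (fun φ => (Phi d φ ^ 2)⁻¹) (cube d) ↔
      IntegrableOn (fun φ : Fin d → ℝ => ‖φ‖ ^ (-4 : ℝ)) (cube d) := by
  have h_cube : MeasurableSet (cube d) := by
    rw [cube_eq_closedBall]
    exact measurableSet_closedBall
  refine ⟨fun h => ?_, fun h => ?_⟩
  · refine (h.const_mul ((d : ℝ) ^ 2)).mono'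
      (measurable_norm.pow_const _).aestronglyMeasurable ?_
    refine ae_restrict_of_forall_mem h_cube fun φ hφ => ?_
    rw [norm_of_nonneg (by positivity)]
    exact norm_rpow_neg_four_le hφ
  · refine (h.const_mul ((π ^ 2 / 4) ^ 2)).mono'
      ((continuous_Phi d).pow 2).measurable.inv.aestronglyMeasurable ?_
    refine ae_restrict_of_forall_mem h_cube fun φ hφ => ?_
    rw [norm_of_nonneg (by positivity)]
    exact inv_Phi_sq_le hφ

/-- `φ ↦ 1/Φ(φ)` belongs to `L²([-π,π]^d)`, i.e. `∫ Φ(φ)^{-2} dφ < ∞`,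
if and only if `d ≥ 5`. -/
theorem inv_Phi_memL2_iff (d : ℕ) (hd : 1 ≤ d) :
    ((∫⁻ φ in cube d, ENNReal.ofReal (((Phi d φ) ^ 2)⁻¹)) < ⊤ ↔ 5 ≤ d) ∧
      (IntegrableOn (fun φ => ((Phi d φ) ^ 2)⁻¹) (cube d) ↔ 5 ≤ d) := by
  have : NeZero d := ⟨by omega⟩
  have h_int : IntegrableOn (fun φ => ((Phi d φ) ^ 2)⁻¹) (cube d) ↔ 5 ≤ d := by
    rw [integrableOn_inv_Phi_sq_iff, cube_eq_closedBall,
      integrableOn_closedBall_norm_rpow_neg_iff volume pi_pos, Module.finrank_fin_fun]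
    norm_cast
  refine ⟨?_, h_int⟩
  rw [lt_top_iff_ne_top, lintegral_ofReal_ne_top_iff_integrable (f := fun φ => (Phi d φ ^ 2)⁻¹)
    ((continuous_Phi d).pow 2).measurable.inv.aestronglyMeasurable
    (ae_of_all _ fun φ => by positivity)]
  exact h_int
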